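/- Let R_1, …, R_n (n ≥ 4) be a REP instance in boundary B, and let r be weights r_{i,α} ∈ [0,1] with Σ_α r_{i,α} = 1 for each i whose fractional density at every point of B is at most k. Let d_1, …, d_n be mutually independent random directions with P(d_i = α) = r_{i,α}. If ε ∈ (0,3) and k ≥ (36/ε²)·ln n, then with probability at least 1 − 4/n, the density of the random escape assignment (d_1, …, d_n) at every point of B is at most (1+ε)·k (randomized rounding is a (1+ε)-approximation with high probability). -/

import Mathlib

/-- One of the four axis-aligned escape directions. -/
inductive Dir | left | right | up | down
deriving DecidableEq

instance : Fintype Dir where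
  elems := {Dir.left, Dir.right, Dir.up, Dir.down}
  complete := by intro x; cases x <;> simp

/-- A closed axis-aligned rectangle `[xmin,xmax] × [ymin,ymax]`. -/
structure Rect where
  xmin : ℝ
  xmax : ℝ
  ymin : ℝ
  ymax : ℝ

/-- The point set of a rectangle. -/
def Rect.pts (r : Rect) : Set (ℝ × ℝ) :=
  {p | r.xmin ≤ p.1 ∧ p.1 ≤ r.xmax ∧ r.ymin ≤ p.2 ∧ p.2 ≤ r.ymax}

/-- The rectangle is a genuine (nonempty) closed rectangle. -/
def Rect.proper (r : Rect) : Prop := r.xmin ≤ r.xmax ∧ r.ymin ≤ r.ymax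

/-- The boundary box `B = [0,W] × [0,H]`. -/
def boundaryBox (W H : ℝ) : Set (ℝ × ℝ) := {p | 0 ≤ p.1 ∧ p.1 ≤ W ∧ 0 ≤ p.2 ∧ p.2 ≤ H}

/-- The rectangle is contained in the boundary box `[0,W] × [0,H]`. -/
def Rect.inB (W H : ℝ) (r : Rect) : Prop :=
  0 ≤ r.xmin ∧ r.xmax ≤ W ∧ 0 ≤ r.ymin ∧ r.ymax ≤ H

/-- The escape path of a rectangle in a given direction, inside `[0,W] × [0,H]`. -/
def Rect.escape (W H : ℝ) (r : Rect) : Dir → Set (ℝ × ℝ)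
  | Dir.right => {p | r.xmin ≤ p.1 ∧ p.1 ≤ W ∧ r.ymin ≤ p.2 ∧ p.2 ≤ r.ymax}
  | Dir.left  => {p | 0 ≤ p.1 ∧ p.1 ≤ r.xmax ∧ r.ymin ≤ p.2 ∧ p.2 ≤ r.ymax}
  | Dir.up    => {p | r.xmin ≤ p.1 ∧ p.1 ≤ r.xmax ∧ r.ymin ≤ p.2 ∧ p.2 ≤ H}
  | Dir.down  => {p | r.xmin ≤ p.1 ∧ p.1 ≤ r.xmax ∧ 0 ≤ p.2 ∧ p.2 ≤ r.ymax}

/-- Density at point `p` of the escape assignment `σ` restricted to the subfamily `S`. -/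
noncomputable def density {n : ℕ} (W H : ℝ) (R : Fin n → Rect) (S : Set (Fin n))
    (σ : Fin n → Dir) (p : ℝ × ℝ) : ℕ :=
  {i | i ∈ S ∧ p ∈ (R i).escape W H (σ i)}.ncard

/-- The optimal (minimum over assignments of the maximum over points of `B`) density of
the subfamily `S`. -/
noncomputable def optDensity {n : ℕ} (W H : ℝ) (R : Fin n → Rect) (S : Set (Fin n)) : ℕ :=
  sInf {k | ∃ σ : Fin n → Dir, ∀ p ∈ boundaryBox W H, density W H R S σ p ≤ k}

/-- `R j` blocks `R i` in direction `α`. -/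
def blocks {n : ℕ} (W H : ℝ) (R : Fin n → Rect) (α : Dir) (j i : Fin n) : Prop :=
  j ≠ i ∧ ¬ Disjoint (R j).pts ((R i).escape W H α)

/-- `R i` is free in direction `α` within the subfamily `S`: no other rectangle of `S`
blocks it in direction `α`. -/
def free {n : ℕ} (W H : ℝ) (R : Fin n → Rect) (S : Set (Fin n)) (i : Fin n) (α : Dir) : Prop :=
  ∀ j ∈ S, j ≠ i → Disjoint ((R i).escape W H α) (R j).pts

/-- `peel W H R ℓ` is the set of indices remaining after removing peeling levels `1,…,ℓ`. -/
def peel {n : ℕ} (W H : ℝ) (R : Fin n → Rect) : ℕ → Set (Fin n)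
  | 0 => Set.univ
  | ℓ + 1 => {i ∈ peel W H R ℓ | ¬ ∃ α, free W H R (peel W H R ℓ) i α}

/-- The peeling level of rectangle `R i` (the least `ℓ` at which it has been removed). -/
noncomputable def levelOf {n : ℕ} (W H : ℝ) (R : Fin n → Rect) (i : Fin n) : ℕ :=
  sInf {ℓ | i ∉ peel W H R ℓ}

/-- The number `ρ` of nonempty peeling levels. -/
noncomputable def numLevels {n : ℕ} (W H : ℝ) (R : Fin n → Rect) : ℕ :=
  sInf {ℓ | peel W H R ℓ = ∅}


/-!
At a fixed point `p` of `B` the density is a sum of independent indicators whose mean is the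
fractional density, at most `k`. The exponential Markov inequality with `t = ε/4`, together with
`1 + x ≤ eˣ`, bounds the probability that it exceeds `(1+ε)k` by `exp(-(5/24)ε²k) ≤ n⁻⁷`.

Moving a point of `B` down and left to the nearest point of the grid spanned by `0` and the
lower-left corner coordinates keeps it inside every escape path that contained it, so it suffices
to control the density on at most `(n+1)²` grid points, and a union bound gives a failure
probability of at most `(n+1)² n⁻⁷ ≤ 4/n`.
-/

open Finset

section ProductDistribution

variable {ι D : Type*} [Fintype ι] [DecidableEq ι] [Fintype D]

theorem sum_pow_card_mul_prod (r : ι → D → ℝ) (q : ι → D → Prop) [∀ i, DecidablePred (q i)]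
    (x : ℝ) :
    ∑ σ : ι → D, x ^ #{i | q i (σ i)} * ∏ i, r i (σ i)
      = ∏ i, ∑ α, (if q i α then x else 1) * r i α := by
  rw [Fintype.prod_sum]
  refine Fintype.sum_congr _ _ fun σ => ?_
  rw [prod_mul_distrib, prod_ite, prod_const, prod_const_one, mul_one]

theorem chernoff_upper_tail (r : ι → D → ℝ) (q : ι → D → Prop) [∀ i, DecidablePred (q i)]
    (hr0 : ∀ i α, 0 ≤ r i α) (hr1 : ∀ i, ∑ α, r i α = 1) {k t : ℝ}
    (hk : ∑ i, ∑ α, (if q i α then r i α else 0) ≤ k) (ht : 0 ≤ t) (a : ℝ) :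
    ∑ σ : ι → D, {σ | a < #{i | q i (σ i)}}.indicator (fun σ => ∏ i, r i (σ i)) σ
      ≤ Real.exp ((Real.exp t - 1) * k - t * a) := by
  have markov : ∀ σ : ι → D, {σ | a < #{i | q i (σ i)}}.indicator (fun σ => ∏ i, r i (σ i)) σ
      ≤ Real.exp (-(t * a)) * (Real.exp t ^ #{i | q i (σ i)} * ∏ i, r i (σ i)) := by
    intro σ
    have hP : 0 ≤ ∏ i, r i (σ i) := prod_nonneg fun i _ => hr0 i (σ i)
    rw [← mul_assoc, ← Real.exp_nat_mul, ← Real.exp_add, Set.indicator_apply]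
    split_ifs with hσ
    · have hσ' : a < #{i | q i (σ i)} := hσ
      exact le_mul_of_one_le_left hP (Real.one_le_exp (by nlinarith))
    · positivity
  have factor : ∀ i, ∑ α, (if q i α then Real.exp t else 1) * r i α
      ≤ Real.exp ((Real.exp t - 1) * ∑ α, if q i α then r i α else 0) := by
    intro i
    have h : ∑ α, (if q i α then Real.exp t else 1) * r i α
        = (Real.exp t - 1) * (∑ α, if q i α then r i α else 0) + ∑ α, r i α := by
      rw [mul_sum, ← sum_add_distrib]
      exact Fintype.sum_congr _ _ fun α => by split_ifs <;> ring
    rw [h, hr1]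
    exact Real.add_one_le_exp _
  have hexp : 0 ≤ Real.exp t - 1 := by linarith [Real.one_le_exp ht]
  calc ∑ σ : ι → D, {σ | a < #{i | q i (σ i)}}.indicator (fun σ => ∏ i, r i (σ i)) σ
      ≤ Real.exp (-(t * a)) * ∏ i, ∑ α, (if q i α then Real.exp t else 1) * r i α := by
        rw [← sum_pow_card_mul_prod, mul_sum]
        exact sum_le_sum fun σ _ => markov σ
    _ ≤ Real.exp (-(t * a)) * Real.exp ((Real.exp t - 1) * k) := by
        gcongr
        calc ∏ i, ∑ α, (if q i α then Real.exp t else 1) * r i α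
            ≤ ∏ i, Real.exp ((Real.exp t - 1) * ∑ α, if q i α then r i α else 0) :=
              prod_le_prod (fun i _ => sum_nonneg fun α _ =>
                mul_nonneg (by split_ifs <;> positivity) (hr0 i α)) fun i _ => factor i
          _ ≤ Real.exp ((Real.exp t - 1) * k) := by
              rw [← Real.exp_sum, ← mul_sum]
              gcongr
    _ = Real.exp ((Real.exp t - 1) * k - t * a) := by
        rw [← Real.exp_add]; ring_nf

end ProductDistribution

theorem sum_indicator_biUnion_le {α β : Type*} [Fintype α] (G : Finset β) (S : β → Set α)
    {P : α → ℝ} (hP : ∀ σ, 0 ≤ P σ) :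
    ∑ σ, (⋃ p ∈ G, S p).indicator P σ ≤ ∑ p ∈ G, ∑ σ, (S p).indicator P σ := by
  rw [sum_comm]
  refine sum_le_sum fun σ _ => ?_
  by_cases hσ : σ ∈ ⋃ p ∈ G, S p
  · obtain ⟨p, hp, hσp⟩ := Set.mem_iUnion₂.1 hσ
    rw [Set.indicator_of_mem hσ]
    calc P σ = (S p).indicator P σ := (Set.indicator_of_mem hσp P).symm
      _ ≤ ∑ p ∈ G, (S p).indicator P σ :=
        single_le_sum (f := fun p => (S p).indicator P σ)
          (fun p _ => Set.indicator_nonneg (fun σ _ => hP σ) σ) hp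
  · rw [Set.indicator_of_notMem hσ]
    exact sum_nonneg fun p _ => Set.indicator_nonneg (fun σ _ => hP σ) σ

theorem exp_quarter_sub_one_sub_le {ε : ℝ} (hε0 : 0 < ε) (hε3 : ε < 3) :
    Real.exp (ε / 4) - 1 - ε / 4 * (1 + ε) ≤ -(5 / 24) * ε ^ 2 := by
  have h := Real.exp_bound' (by positivity : (0:ℝ) ≤ ε / 4) (by linarith : ε / 4 ≤ 1)
    (n := 3) (by norm_num)
  norm_num [Finset.sum_range_succ, Nat.factorial] at h
  nlinarith [pow_pos hε0 3, sq_nonneg ε]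

theorem sq_add_one_mul_inv_pow_seven_le {x : ℝ} (hx : 1 ≤ x) :
    (x + 1) ^ 2 * (x ^ 7)⁻¹ ≤ 4 / x := by
  rw [← div_eq_mul_inv, div_le_div_iff₀ (by positivity) (by positivity)]
  nlinarith [pow_le_pow_right₀ hx (by norm_num : 3 ≤ 7),
    mul_nonneg (mul_nonneg (by linarith : 0 ≤ x) (by linarith : 0 ≤ 3 * x + 1))
      (by linarith : 0 ≤ x - 1)]

theorem Finset.exists_greatest_le {α : Type*} [LinearOrder α] (s : Finset α) {x z : α}
    (hz : z ∈ s) (hzx : z ≤ x) : ∃ y ∈ s, y ≤ x ∧ ∀ z ∈ s, z ≤ x → z ≤ y := by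
  obtain ⟨y, hy, hmax⟩ := (s.filter (· ≤ x)).exists_max_image id ⟨z, mem_filter.2 ⟨hz, hzx⟩⟩
  exact ⟨y, (mem_filter.1 hy).1, (mem_filter.1 hy).2,
    fun z hz hzx => hmax z (mem_filter.2 ⟨hz, hzx⟩)⟩

theorem exp_neg_le_inv_pow_seven {n : ℕ} (hn : 0 < n) {ε k : ℝ} (hε0 : 0 < ε)
    (hk : 36 / ε ^ 2 * Real.log n ≤ k) :
    Real.exp (-(5 / 24) * ε ^ 2 * k) ≤ ((n : ℝ) ^ 7)⁻¹ := by
  have hn' : (0 : ℝ) < n := by exact_mod_cast hn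
  have hlog : 0 ≤ Real.log n := Real.log_nonneg (by exact_mod_cast hn)
  have hεk : 36 * Real.log n ≤ ε ^ 2 * k := by
    rwa [div_mul_eq_mul_div, div_le_iff₀ (by positivity), mul_comm k] at hk
  calc Real.exp (-(5 / 24) * ε ^ 2 * k) ≤ Real.exp (((7 : ℕ) : ℝ) * -Real.log n) :=
        Real.exp_le_exp.2 (by push_cast; linarith)
    _ = ((n : ℝ) ^ 7)⁻¹ := by rw [Real.exp_nat_mul, Real.exp_neg, Real.exp_log hn', inv_pow]

theorem density_mono_of_escape_imp {n : ℕ} {W H : ℝ} {R : Fin n → Rect} {S : Set (Fin n)}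
    {σ : Fin n → Dir} {p p' : ℝ × ℝ}
    (h : ∀ i α, p ∈ (R i).escape W H α → p' ∈ (R i).escape W H α) :
    density W H R S σ p ≤ density W H R S σ p' :=
  Set.ncard_le_ncard (fun i hi => ⟨hi.1, h i (σ i) hi.2⟩) (Set.toFinite _)

open Classical in
theorem density_univ_eq_card {n : ℕ} (W H : ℝ) (R : Fin n → Rect) (σ : Fin n → Dir)
    (p : ℝ × ℝ) : density W H R Set.univ σ p = #{i | p ∈ (R i).escape W H (σ i)} := by
  rw [density, ← Set.ncard_coe_finset]
  congr 1
  ext i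
  simp

theorem sum_indicator_density_gt_le_exp {n : ℕ} {W H : ℝ} (R : Fin n → Rect) {r : Fin n → Dir → ℝ}
    (hr0 : ∀ i α, 0 ≤ r i α) (hrsum : ∀ i, ∑ α, r i α = 1) {k ε : ℝ} {p : ℝ × ℝ}
    (hfrac : ∑ i, ∑ α, ((R i).escape W H α).indicator (fun _ => r i α) p ≤ k)
    (hk0 : 0 ≤ k) (hε0 : 0 < ε) (hε3 : ε < 3) :
    ∑ σ : Fin n → Dir, {σ | (1 + ε) * k < density W H R Set.univ σ p}.indicator
        (fun σ => ∏ i, r i (σ i)) σ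
      ≤ Real.exp (-(5 / 24) * ε ^ 2 * k) := by
  classical
  simp only [Set.indicator_apply] at hfrac
  simp only [density_univ_eq_card]
  refine (chernoff_upper_tail r (fun i α => p ∈ (R i).escape W H α) hr0 hrsum hfrac
    (by positivity : 0 ≤ ε / 4) ((1 + ε) * k)).trans (Real.exp_le_exp.2 ?_)
  nlinarith [mul_le_mul_of_nonneg_right (exp_quarter_sub_one_sub_le hε0 hε3) hk0]

open Classical in
noncomputable def snapGrid {n : ℕ} (W H : ℝ) (R : Fin n → Rect) : Finset (ℝ × ℝ) :=
  {p ∈ insert 0 (univ.image fun i => (R i).xmin) ×ˢ insert 0 (univ.image fun i => (R i).ymin) |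
    p ∈ boundaryBox W H}

theorem card_snapGrid_le {n : ℕ} (W H : ℝ) (R : Fin n → Rect) :
    #(snapGrid W H R) ≤ (n + 1) ^ 2 := by
  classical
  refine (card_filter_le _ _).trans ?_
  rw [card_product, sq]
  have hcard : ∀ f : Fin n → ℝ, #(insert 0 (univ.image f)) ≤ n + 1 := fun f =>
    (card_insert_le _ _).trans (by simpa using card_image_le (s := univ) (f := f))
  exact Nat.mul_le_mul (hcard _) (hcard _)

theorem exists_mem_snapGrid_escape_imp {n : ℕ} {W H : ℝ} (R : Fin n → Rect) {p : ℝ × ℝ}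
    (hp : p ∈ boundaryBox W H) :
    ∃ p' ∈ snapGrid W H R, ∀ i α, p ∈ (R i).escape W H α → p' ∈ (R i).escape W H α := by
  classical
  obtain ⟨hx0, hxW, hy0, hyH⟩ := hp
  obtain ⟨x, hx, hxp, hxmax⟩ :=
    exists_greatest_le (insert 0 (univ.image fun i => (R i).xmin)) (mem_insert_self 0 _) hx0
  obtain ⟨y, hy, hyp, hymax⟩ :=
    exists_greatest_le (insert 0 (univ.image fun i => (R i).ymin)) (mem_insert_self 0 _) hy0
  have hx0' := hxmax 0 (mem_insert_self 0 _) hx0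
  have hy0' := hymax 0 (mem_insert_self 0 _) hy0
  refine ⟨(x, y), mem_filter.2 ⟨mem_product.2 ⟨hx, hy⟩, ⟨hx0', by linarith, hy0', by linarith⟩⟩,
    fun i α h => ?_⟩
  have hxmin := hxmax (R i).xmin (mem_insert_of_mem (mem_image_of_mem _ (mem_univ i)))
  have hymin := hymax (R i).ymin (mem_insert_of_mem (mem_image_of_mem _ (mem_univ i)))
  cases α <;> obtain ⟨h1, h2, h3, h4⟩ := h <;> refine ⟨?_, ?_, ?_, ?_⟩ <;>
    first | linarith | exact hxmin ‹_› | exact hymin ‹_›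

theorem mem_boundaryBox_of_mem_snapGrid {n : ℕ} {W H : ℝ} {R : Fin n → Rect} {p : ℝ × ℝ}
    (hp : p ∈ snapGrid W H R) : p ∈ boundaryBox W H := by
  classical
  exact (mem_filter.1 hp).2

theorem sum_indicator_exceeds_le_sum_snapGrid {n : ℕ} {W H : ℝ} (R : Fin n → Rect)
    {P : (Fin n → Dir) → ℝ} (hP : ∀ σ, 0 ≤ P σ) (c : ℝ) :
    ∑ σ, {σ | ∀ p ∈ boundaryBox W H, (density W H R Set.univ σ p : ℝ) ≤ c}ᶜ.indicator P σ
      ≤ ∑ p ∈ snapGrid W H R, ∑ σ, {σ | c < density W H R Set.univ σ p}.indicator P σ := by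
  refine le_trans (sum_le_sum fun σ _ => Set.indicator_le_indicator_of_subset ?_ hP σ)
    (sum_indicator_biUnion_le _ _ hP)
  intro σ hσ
  obtain ⟨p, hp, hexceeds⟩ := not_forall₂.1 hσ
  obtain ⟨p', hp', hmono⟩ := exists_mem_snapGrid_escape_imp R hp
  refine Set.mem_biUnion hp' (lt_of_lt_of_le (not_le.1 hexceeds) ?_)
  exact_mod_cast density_mono_of_escape_imp hmono

theorem randomized_rounding_whp_general {n : ℕ} (hn : 4 ≤ n) (W H : ℝ) (R : Fin n → Rect)
    (r : Fin n → Dir → ℝ) (k : ℝ)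
    (hr01 : ∀ i α, 0 ≤ r i α ∧ r i α ≤ 1)
    (hrsum : ∀ i, ∑ α : Dir, r i α = 1)
    (hfrac : ∀ p ∈ boundaryBox W H,
      ∑ i : Fin n, ∑ α : Dir, ((R i).escape W H α).indicator (fun _ => r i α) p ≤ k)
    (ε : ℝ) (hε0 : 0 < ε) (hε3 : ε < 3)
    (hk : (36 / ε ^ 2) * Real.log n ≤ k) :
    1 - 4 / (n : ℝ) ≤
      ∑ σ : Fin n → Dir,
        ({σ' : Fin n → Dir | ∀ p ∈ boundaryBox W H,
            (density W H R Set.univ σ' p : ℝ) ≤ (1 + ε) * k}.indicator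
          (fun σ' => ∏ i, r i (σ' i)) σ) := by
  set E := {σ' : Fin n → Dir | ∀ p ∈ boundaryBox W H,
    (density W H R Set.univ σ' p : ℝ) ≤ (1 + ε) * k}
  set P : (Fin n → Dir) → ℝ := fun σ => ∏ i, r i (σ i)
  have hr0 i α : 0 ≤ r i α := (hr01 i α).1
  have hn1 : (1 : ℝ) ≤ n := by exact_mod_cast (by omega : 1 ≤ n)
  have hk0 : 0 ≤ k := le_trans (mul_nonneg (by positivity) (Real.log_nonneg hn1)) hk
  have hpoint p (hp : p ∈ snapGrid W H R) :
      ∑ σ, {σ | (1 + ε) * k < density W H R Set.univ σ p}.indicator P σ ≤ ((n : ℝ) ^ 7)⁻¹ :=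
    (sum_indicator_density_gt_le_exp R hr0 hrsum (hfrac p (mem_boundaryBox_of_mem_snapGrid hp)) hk0
      hε0 hε3).trans (exp_neg_le_inv_pow_seven (by omega) hε0 hk)
  have hcard : (#(snapGrid W H R) : ℝ) ≤ (n + 1) ^ 2 := by exact_mod_cast card_snapGrid_le W H R
  have htotal : ∑ σ, P σ = 1 := by simp [P, ← Fintype.prod_sum, hrsum]
  calc 1 - 4 / (n : ℝ) ≤ 1 - (n + 1) ^ 2 * ((n : ℝ) ^ 7)⁻¹ := by
        linarith [sq_add_one_mul_inv_pow_seven_le hn1]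
    _ ≤ 1 - ∑ p ∈ snapGrid W H R, ((n : ℝ) ^ 7)⁻¹ := by
        rw [sum_const, nsmul_eq_mul]
        gcongr
    _ ≤ 1 - ∑ σ, Eᶜ.indicator P σ := by
        gcongr 1 - ?_
        exact (sum_indicator_exceeds_le_sum_snapGrid R (fun σ => prod_nonneg fun i _ => hr0 i (σ i))
          _).trans (sum_le_sum hpoint)
    _ = ∑ σ, E.indicator P σ := by
        rw [← htotal, sub_eq_iff_eq_add, ← sum_add_distrib]
        exact Fintype.sum_congr _ _ fun σ => (Set.indicator_self_add_compl_apply E P σ).symm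

/-- Randomized rounding is a `(1+ε)`-approximation w.h.p.: if `r` is a
probability distribution over directions for each rectangle with fractional density at
most `k` everywhere in `B`, `ε ∈ (0,3)`, and `k ≥ (36/ε²)·ln n` with `n ≥ 4`, then
choosing each direction `d i` independently with `P(d i = α) = r i α`, the probability
that the resulting assignment has density at most `(1+ε)·k` at every point of `B` is at
least `1 - 4/n`. (The probability of an event `E` over assignments is
`∑_{σ ∈ E} ∏ i, r i (σ i)`.) -/
theorem randomized_rounding_whp {n : ℕ} (hn : 4 ≤ n) (W H : ℝ) (R : Fin n → Rect)
    (hprop : ∀ i, (R i).proper) (hin : ∀ i, (R i).inB W H)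
    (r : Fin n → Dir → ℝ) (k : ℝ)
    (hr01 : ∀ i α, 0 ≤ r i α ∧ r i α ≤ 1)
    (hrsum : ∀ i, ∑ α : Dir, r i α = 1)
    (hfrac : ∀ p ∈ boundaryBox W H,
      ∑ i : Fin n, ∑ α : Dir, ((R i).escape W H α).indicator (fun _ => r i α) p ≤ k)
    (ε : ℝ) (hε0 : 0 < ε) (hε3 : ε < 3)
    (hk : (36 / ε ^ 2) * Real.log n ≤ k) :
    1 - 4 / (n : ℝ) ≤
      ∑ σ : Fin n → Dir,
        ({σ' : Fin n → Dir | ∀ p ∈ boundaryBox W H,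
            (density W H R Set.univ σ' p : ℝ) ≤ (1 + ε) * k}.indicator
          (fun σ' => ∏ i, r i (σ' i)) σ) :=
  randomized_rounding_whp_general hn W H R r k hr01 hrsum hfrac ε hε0 hε3 hk
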